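/- Let G be a d-regular graph on n vertices and let (A,B) be a near-bisection minimizing the cut size among all near-bisections. If d is even, then at least one of A, B is (d/2)-cohesive, i.e., every vertex of that part has at least d/2 neighbors inside the part. -/
import Mathlib


open Finset

open scoped Classical in
noncomputable def degIn {V : Type*} (G : SimpleGraph V) (S : Finset V) (x : V) : ℕ :=
  (S.filter fun y => G.Adj x y).card

open scoped Classical in
/-- The number of edges in the cut determined by A. -/
noncomputable def cutCard {V : Type*} [Fintype V] [DecidableEq V]
    (G : SimpleGraph V) (A : Finset V) : ℕ :=
  ∑ x ∈ A, degIn G Aᶜ x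

section
variable {V : Type*} (G : SimpleGraph V) [DecidableRel G.Adj]

lemma degIn_sum_ite (S : Finset V) (s : V) :
    ∑ v ∈ S, (if G.Adj s v then 1 else 0) = degIn G S s := by
  rw [degIn, Finset.card_filter]
  exact Finset.sum_congr rfl fun i _ => by congr

variable [DecidableEq V]

lemma degIn_insert {x : V} {S : Finset V} (hx : x ∉ S) (v : V) :
    degIn G (insert x S) v = degIn G S v + if G.Adj v x then 1 else 0 := by
  rw [degIn, degIn, Finset.filter_insert]
  split_ifs with h
  · rw [Finset.card_insert_of_notMem (by simp [hx])]
  · simp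

lemma degIn_erase {x : V} {S : Finset V} (hx : x ∈ S) (v : V) :
    degIn G S v = degIn G (S.erase x) v + if G.Adj v x then 1 else 0 := by
  conv_lhs => rw [← Finset.insert_erase hx]
  exact degIn_insert G (Finset.notMem_erase x S) v

lemma degIn_split [Fintype V] {d : ℕ} (hreg : G.IsRegularOfDegree d)
    (S : Finset V) (v : V) : degIn G S v + degIn G Sᶜ v = d := by
  rw [← degIn_sum_ite, ← degIn_sum_ite, Finset.sum_add_sum_compl]
  have h : ∑ w, (if G.Adj v w then (1:ℕ) else 0) = G.degree v := by
    rw [← Finset.card_filter, ← SimpleGraph.card_neighborFinset_eq_degree]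
    congr 1
    ext w
    simp [SimpleGraph.mem_neighborFinset]
  rw [h, hreg v]
end

set_option maxHeartbeats 1000000 in
/-- In a cut-minimizing near-bisection of a d-regular graph with d even, at least one of
the two parts is (d/2)-cohesive. -/
theorem min_cut_near_bisection_cohesive {V : Type*} [Fintype V] [DecidableEq V]
    (G : SimpleGraph V) [DecidableRel G.Adj] (d : ℕ)
    (hreg : G.IsRegularOfDegree d) (hd : Even d) (A : Finset V)
    (hnear : A.card ≤ Aᶜ.card + 1 ∧ Aᶜ.card ≤ A.card + 1)
    (hopt : ∀ A' : Finset V, A'.card ≤ A'ᶜ.card + 1 → A'ᶜ.card ≤ A'.card + 1 →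
      cutCard G A ≤ cutCard G A') :
    (∀ x ∈ A, d / 2 ≤ degIn G A x) ∨ (∀ y ∈ Aᶜ, d / 2 ≤ degIn G Aᶜ y) := by
  by_contra hcon
  push_neg at hcon
  obtain ⟨⟨x, hxA, hx⟩, ⟨y, hyC, hy⟩⟩ := hcon
  obtain ⟨k, hk⟩ := hd
  have hyA : y ∉ A := Finset.mem_compl.mp hyC
  have hxy : x ≠ y := fun h => hyA (h ▸ hxA)
  have hxC : x ∉ Aᶜ := by simp [hxA]
  have hax : degIn G A x + degIn G Aᶜ x = d := degIn_split G hreg A x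
  have hby : degIn G A y + degIn G Aᶜ y = d := degIn_split G hreg A y
  set A' : Finset V := insert y (A.erase x) with hA'
  have hyNot : y ∉ A.erase x := fun h => hyA (Finset.mem_of_mem_erase h)
  have hcard : A'.card = A.card := by
    have h1 : 1 ≤ A.card := Finset.card_pos.mpr ⟨x, hxA⟩
    rw [hA', Finset.card_insert_of_notMem hyNot, Finset.card_erase_of_mem hxA]
    omega
  have hcompl : A'ᶜ = insert x (Aᶜ.erase y) := by
    ext z
    simp only [hA', Finset.mem_compl, Finset.mem_insert, Finset.mem_erase]
    by_cases hz : z = x <;> simp_all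
  have hccard : A'ᶜ.card = Aᶜ.card := by
    have h1 := Finset.card_add_card_compl A'
    have h2 := Finset.card_add_card_compl A
    omega
  have hxNotErase : x ∉ Aᶜ.erase y := fun h => hxC (Finset.mem_of_mem_erase h)
  -- pointwise identity
  have hstar : ∀ v, degIn G A'ᶜ v + (if G.Adj v y then 1 else 0)
      = degIn G Aᶜ v + (if G.Adj v x then 1 else 0) := by
    intro v
    rw [hcompl, degIn_insert G hxNotErase v, degIn_erase G hyC v]
    ring
  have hsum : cutCard G A' + ∑ v ∈ A', (if G.Adj v y then 1 else 0)
      = ∑ v ∈ A', degIn G Aᶜ v + ∑ v ∈ A', (if G.Adj v x then 1 else 0) := by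
    rw [cutCard, ← Finset.sum_add_distrib, ← Finset.sum_add_distrib]
    exact Finset.sum_congr rfl fun v _ => hstar v
  have hs1 : ∑ v ∈ A', (if G.Adj v y then 1 else 0) = degIn G A' y := by
    rw [← degIn_sum_ite]
    exact Finset.sum_congr rfl fun v _ => if_congr (G.adj_comm v y) rfl rfl
  have hs2 : ∑ v ∈ A', (if G.Adj v x then 1 else 0) = degIn G A' x := by
    rw [← degIn_sum_ite]
    exact Finset.sum_congr rfl fun v _ => if_congr (G.adj_comm v x) rfl rfl
  have hs3 : ∑ v ∈ A', degIn G Aᶜ v = degIn G Aᶜ y + ∑ v ∈ A.erase x, degIn G Aᶜ v := by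
    rw [hA', Finset.sum_insert hyNot]
  have hs4 : ∑ v ∈ A.erase x, degIn G Aᶜ v + degIn G Aᶜ x = cutCard G A :=
    Finset.sum_erase_add A _ hxA
  -- evaluate degIn G A' y and degIn G A' x
  have hAy : degIn G A' y = degIn G (A.erase x) y := by
    rw [hA', degIn_insert G hyNot y, if_neg (G.irrefl), add_zero]
  have hAy' : degIn G A y = degIn G (A.erase x) y + (if G.Adj y x then 1 else 0) :=
    degIn_erase G hxA y
  have hAx : degIn G A' x = degIn G (A.erase x) x + (if G.Adj x y then 1 else 0) := by
    rw [hA', degIn_insert G hyNot x]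
  have hAx' : degIn G A x = degIn G (A.erase x) x := by
    rw [degIn_erase G hxA x, if_neg (G.irrefl), add_zero]
  have hcc : (if G.Adj y x then 1 else 0) = (if G.Adj x y then 1 else 0) :=
    if_congr (G.adj_comm y x) rfl rfl
  have hle : (if G.Adj x y then (1:ℕ) else 0) ≤ 1 := by split_ifs <;> omega
  -- the inequality forcing a contradiction
  have hdx : degIn G A x < d / 2 := hx
  have hdy : degIn G Aᶜ y < d / 2 := hy
  have hlt : cutCard G A' < cutCard G A := by omega
  have := hopt A' (by omega) (by omega)
  omega
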